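/- The cochain DG algebra B₈ with underlying graded algebra k⟨x₁,x₂⟩ (generators in degree 1) and differential given by ∂(x₁) = x₂², ∂(x₂) = x₂² has cohomology the polynomial algebra on the class of x₂ − x₁: for every j ≥ 0, Hʲ(B₈) is one-dimensional, spanned by the class of (x₂ − x₁)ʲ. -/

import Mathlib

/-!
Conjugating `∂` by the degree-preserving involution `x₁ ↦ x₂ - x₁`, `x₂ ↦ x₂` gives the
derivation `D` with `D x₁ = 0`, `D x₂ = x₂²`, which kills `x₁ʲ`. For `D`, the homotopy `h` that
lowers the first block `x₂ᵇ` of even length to `x₂ᵇ⁻¹` satisfies `D h + h D = id` on every word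
other than the powers of `x₁`, so every `D`-cocycle `x` of degree `j` is `c • x₁ʲ + D (h x)`.

The class of `(x₂ - x₁)ʲ` is not zero: the image of `∂` lies in the ideal generated by `x₂`, so the
algebra map `x₁ ↦ 1`, `x₂ ↦ 0` to `k` kills it, but sends `(x₂ - x₁)ʲ` to `(-1)ʲ`.
-/

/-- The degree-`i` homogeneous component of the free algebra `k⟨x_1,...,x_n⟩`
with all generators in degree `1`: the span of the words of length `i`. -/
noncomputable def deg (k : Type*) [CommRing k] (n : ℕ) (i : ℕ) :
    Submodule k (FreeAlgebra k (Fin n)) :=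
  Submodule.span k
    {w | ∃ f : Fin i → Fin n, w = (List.ofFn fun j => FreeAlgebra.ι k (f j)).prod}

open FreeAlgebra Submodule

lemma List.exists_eq_replicate_append {α : Type*} (a : α) (l : List α) :
    ∃ b u, l = .replicate b a ++ u ∧ u.head? ≠ some a := by
  induction l with
  | nil => exact ⟨0, [], by simp⟩
  | cons i l ih =>
    by_cases hi : i = a
    · obtain ⟨b, u, rfl, hu⟩ := ih
      exact ⟨b + 1, u, by simp [hi, List.replicate_succ], hu⟩
    · exact ⟨0, i :: l, by simp, by simpa using hi⟩

namespace FreeAlgebra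

variable {k : Type*} [CommRing k]

section Word

variable {X : Type*}

noncomputable def word (l : List X) : FreeAlgebra k X := (l.map (ι k)).prod

@[simp] lemma word_nil : (word [] : FreeAlgebra k X) = 1 := rfl

@[simp] lemma word_cons (i : X) (l : List X) :
    (word (i :: l) : FreeAlgebra k X) = ι k i * word l := by
  simp [word]

lemma word_append (l l' : List X) : (word (l ++ l') : FreeAlgebra k X) = word l * word l' := by
  simp [word]

lemma word_replicate (b : ℕ) (i : X) : (word (.replicate b i) : FreeAlgebra k X) = ι k i ^ b := by
  simp [word]

lemma basisFreeMonoid_ofList (l : List X) :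
    basisFreeMonoid k X (FreeMonoid.ofList l) = word l := by
  simp [basisFreeMonoid, equivMonoidAlgebraFreeMonoid, word]

lemma span_range_word : span k (Set.range (word (k := k) (X := X))) = ⊤ := by
  rw [← (basisFreeMonoid k X).span_eq]
  congr 1
  ext x
  exact ⟨fun ⟨l, hl⟩ => ⟨.ofList l, by rw [basisFreeMonoid_ofList, hl]⟩,
    fun ⟨w, hw⟩ => ⟨w.toList, by rw [← hw, ← basisFreeMonoid_ofList]; rfl⟩⟩

lemma linearMap_ext_word {M : Type*} [AddCommMonoid M] [Module k M]
    {f g : FreeAlgebra k X →ₗ[k] M} (h : ∀ l, f (word l) = g (word l)) : f = g :=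
  (basisFreeMonoid k X).ext fun w => by
    rw [← FreeMonoid.ofList_toList w, basisFreeMonoid_ofList]
    exact h _

end Word

section Deg

variable {n : ℕ}

lemma deg_eq_span_word (j : ℕ) : deg k n j = span k (word '' {l | l.length = j}) := by
  unfold deg
  congr 1
  ext w
  constructor
  · rintro ⟨f, rfl⟩
    exact ⟨List.ofFn f, List.length_ofFn, by simp [word]; rfl⟩
  · rintro ⟨l, rfl, rfl⟩
    exact ⟨l.get, by simp [word]⟩

lemma word_mem_deg (l : List (Fin n)) : (word l : FreeAlgebra k (Fin n)) ∈ deg k n l.length := by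
  rw [deg_eq_span_word]
  exact subset_span ⟨l, rfl, rfl⟩

lemma one_mem_deg_zero : (1 : FreeAlgebra k (Fin n)) ∈ deg k n 0 :=
  word_mem_deg []

lemma ι_mem_deg_one (i : Fin n) : ι k i ∈ deg k n 1 := by
  simpa using word_mem_deg (k := k) [i]

lemma mul_mem_deg {p q : ℕ} {x x' : FreeAlgebra k (Fin n)} (hx : x ∈ deg k n p)
    (hx' : x' ∈ deg k n q) : x * x' ∈ deg k n (p + q) := by
  rw [deg_eq_span_word] at hx hx' ⊢
  have h := mul_mem_mul hx hx'
  rw [span_mul_span] at h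
  refine span_le.2 ?_ h
  rintro _ ⟨_, ⟨l, rfl, rfl⟩, _, ⟨l', rfl, rfl⟩, rfl⟩
  exact subset_span ⟨l ++ l', List.length_append, word_append l l'⟩

lemma pow_mem_deg {x : FreeAlgebra k (Fin n)} (hx : x ∈ deg k n 1) (j : ℕ) :
    x ^ j ∈ deg k n j := by
  induction j with
  | zero => exact one_mem_deg_zero
  | succ j ih => rw [pow_succ]; exact mul_mem_deg ih hx

lemma algHom_mem_deg {m : ℕ} (φ : FreeAlgebra k (Fin n) →ₐ[k] FreeAlgebra k (Fin m))
    (hφ : ∀ i, φ (ι k i) ∈ deg k m 1) {j : ℕ} {x : FreeAlgebra k (Fin n)} (hx : x ∈ deg k n j) :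
    φ x ∈ deg k m j := by
  have hword (l : List (Fin n)) : φ (word l) ∈ deg k m l.length := by
    induction l with
    | nil => simpa using one_mem_deg_zero
    | cons i l ih => simpa [add_comm] using mul_mem_deg (hφ i) ih
  rw [deg_eq_span_word] at hx
  induction hx using span_induction with
  | mem _ h => obtain ⟨l, rfl, rfl⟩ := h; exact hword l
  | zero => simp
  | add _ _ _ _ h h' => rw [map_add]; exact add_mem h h'
  | smul c _ _ h => rw [map_smul]; exact smul_mem _ c h

end Deg

end FreeAlgebra

section GradedDerivation

variable {k : Type*} [CommRing k] {n : ℕ}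

def IsGradedDerivation (D : FreeAlgebra k (Fin n) →ₗ[k] FreeAlgebra k (Fin n)) : Prop :=
  ∀ (p : ℕ) (a b : FreeAlgebra k (Fin n)), a ∈ deg k n p →
    D (a * b) = D a * b + ((-1 : k) ^ p) • (a * D b)

namespace IsGradedDerivation

variable {D : FreeAlgebra k (Fin n) →ₗ[k] FreeAlgebra k (Fin n)} (hD : IsGradedDerivation D)
include hD

lemma map_one : D 1 = 0 := by
  simpa using hD 0 1 1 one_mem_deg_zero

lemma map_ι_mul (i : Fin n) (x : FreeAlgebra k (Fin n)) :
    D (ι k i * x) = D (ι k i) * x - ι k i * D x := by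
  simp [hD 1 _ x (ι_mem_deg_one i), sub_eq_add_neg]

lemma map_pow_eq_zero {p : ℕ} {x : FreeAlgebra k (Fin n)} (hx : x ∈ deg k n p) (h : D x = 0)
    (j : ℕ) : D (x ^ j) = 0 := by
  induction j with
  | zero => exact hD.map_one
  | succ j ih => rw [pow_succ', hD p _ _ hx, h, ih, zero_mul, mul_zero, smul_zero, add_zero]

lemma map_ι_pow_two_mul {i : Fin n} (hi : D (ι k i) = ι k i * ι k i) (c : ℕ) :
    D (ι k i ^ (2 * c)) = 0 ∧ D (ι k i ^ (2 * c + 1)) = ι k i ^ (2 * c + 2) := by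
  have hsucc (b : ℕ) : D (ι k i ^ (b + 1)) = ι k i ^ (b + 2) - ι k i * D (ι k i ^ b) := by
    rw [pow_succ', hD.map_ι_mul, hi, ← pow_two, ← pow_add, add_comm]
  induction c with
  | zero => simp [hD.map_one, hi, sq]
  | succ c ih =>
    have heven : D (ι k i ^ (2 * (c + 1))) = 0 := by
      rw [show 2 * (c + 1) = 2 * c + 1 + 1 by ring, hsucc, ih.2, ← pow_succ', sub_self]
    refine ⟨heven, ?_⟩
    rw [hsucc, heven, mul_zero, sub_zero]

lemma algHom_map_eq_zero {A : Type*} [Ring A] [Algebra k A]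
    (φ : FreeAlgebra k (Fin n) →ₐ[k] A) (hφ : ∀ i, φ (D (ι k i)) = 0) (x : FreeAlgebra k (Fin n)) :
    φ (D x) = 0 := by
  suffices φ.toLinearMap ∘ₗ D = 0 from LinearMap.congr_fun this x
  refine linearMap_ext_word fun l => ?_
  induction l with
  | nil => simp [hD.map_one]
  | cons i l ih =>
    simp only [LinearMap.comp_apply, AlgHom.toLinearMap_apply, LinearMap.zero_apply] at ih ⊢
    rw [word_cons, hD.map_ι_mul, map_sub, map_mul, map_mul, hφ, ih, zero_mul, mul_zero, sub_zero]

lemma conj (e : FreeAlgebra k (Fin n) ≃ₐ[k] FreeAlgebra k (Fin n))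
    (he : ∀ j x, x ∈ deg k n j → e.symm x ∈ deg k n j) :
    IsGradedDerivation (e.toLinearMap ∘ₗ D ∘ₗ e.symm.toLinearMap) := by
  intro p a b ha
  simp [hD p _ _ (he p a ha)]

end IsGradedDerivation

namespace FreeAlgebra

noncomputable def spanWordsHeadNeOne : Submodule k (FreeAlgebra k (Fin 2)) :=
  span k (word '' {u | u.head? ≠ some 1})

lemma ι_zero_mul_mem_spanWordsHeadNeOne (x : FreeAlgebra k (Fin 2)) :
    ι k 0 * x ∈ spanWordsHeadNeOne := by
  have : span k (Set.range word) ≤ spanWordsHeadNeOne.comap (LinearMap.mulLeft k (ι k 0)) :=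
    span_le.2 <| by rintro _ ⟨l, rfl⟩; exact subset_span ⟨0 :: l, by simp, word_cons 0 l⟩
  exact this (by rw [span_range_word]; trivial)

/- On a word `x₁ᵃ x₂ᵇ u` with `u` not starting with `x₂`, this is `(-1)ᵃ x₁ᵃ x₂ᵇ⁻¹ u` if `b` is
even and positive, and `0` otherwise: the contracting homotopy `x₂ᵇ ↦ x₂ᵇ⁻¹` (`b` even) of
`x₂ k[x₂]`, on which `D x₂ᵇ` is `x₂ᵇ⁺¹` or `0` as `b` is odd or even, applied to the first block of
`x₂`'s. -/
noncomputable def homotopyWord : List (Fin 2) → FreeAlgebra k (Fin 2)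
  | [] => 0
  | i :: l => if i = 0 then -(ι k 0 * homotopyWord l)
      else if Odd (l.takeWhile (· = 1)).length then word l else 0

noncomputable def homotopy : FreeAlgebra k (Fin 2) →ₗ[k] FreeAlgebra k (Fin 2) :=
  (basisFreeMonoid k (Fin 2)).constr k fun w => homotopyWord w.toList

lemma homotopy_word (l : List (Fin 2)) :
    homotopy (word l : FreeAlgebra k (Fin 2)) = homotopyWord l := by
  rw [← basisFreeMonoid_ofList, homotopy, Module.Basis.constr_basis]
  rfl

lemma homotopy_one : homotopy (1 : FreeAlgebra k (Fin 2)) = 0 :=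
  homotopy_word []

lemma homotopy_ι_zero_mul (x : FreeAlgebra k (Fin 2)) :
    homotopy (ι k 0 * x) = -(ι k 0 * homotopy x) := by
  suffices homotopy ∘ₗ LinearMap.mulLeft k (ι k 0) = -(LinearMap.mulLeft k (ι k 0) ∘ₗ homotopy) from
    LinearMap.congr_fun this x
  refine linearMap_ext_word fun l => ?_
  simp [← word_cons, homotopy_word, homotopyWord]

lemma homotopy_ι_one_pow_succ_mul (b : ℕ) {m : FreeAlgebra k (Fin 2)}
    (hm : m ∈ spanWordsHeadNeOne) :
    homotopy (ι k 1 ^ (b + 1) * m) = if Odd b then ι k 1 ^ b * m else 0 := by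
  let g : FreeAlgebra k (Fin 2) →ₗ[k] FreeAlgebra k (Fin 2) :=
    if Odd b then LinearMap.mulLeft k (ι k 1 ^ b) else 0
  suffices Set.EqOn (homotopy ∘ₗ LinearMap.mulLeft k (ι k 1 ^ (b + 1))) g
      (word '' {u | u.head? ≠ some 1}) by
    by_cases hb : Odd b <;> simpa [g, hb] using LinearMap.eqOn_span this hm
  rintro _ ⟨u, hu, rfl⟩
  have htake : (u.takeWhile (· = 1)) = [] := by
    rcases u with _ | ⟨i, u⟩
    · rfl
    · simpa using hu
  rw [LinearMap.comp_apply, LinearMap.mulLeft_apply, ← word_replicate, ← word_append,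
    List.replicate_succ, List.cons_append, homotopy_word, homotopyWord,
    List.takeWhile_append_of_pos (by simp), htake]
  by_cases hb : Odd b <;> simp [g, hb, word_append, word_replicate]

lemma homotopy_mem_deg {j : ℕ} {x : FreeAlgebra k (Fin 2)} (hx : x ∈ deg k 2 j) :
    homotopy x ∈ deg k 2 (j - 1) := by
  have hword (l : List (Fin 2)) : homotopyWord (k := k) l ∈ deg k 2 (l.length - 1) := by
    induction l with
    | nil => exact zero_mem _
    | cons i l ih =>
      rw [homotopyWord]
      split_ifs
      · cases l with
        | nil => simp [homotopyWord]
        | cons i' l => simpa [add_comm] using neg_mem (mul_mem_deg (ι_mem_deg_one 0) ih)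
      · exact word_mem_deg l
      · exact zero_mem _
  rw [deg_eq_span_word] at hx
  induction hx using span_induction with
  | mem _ h => obtain ⟨l, rfl, rfl⟩ := h; rw [homotopy_word]; exact hword l
  | zero => simp
  | add _ _ _ _ h h' => rw [map_add]; exact add_mem h h'
  | smul c _ _ h => rw [map_smul]; exact smul_mem _ c h

end FreeAlgebra

namespace IsGradedDerivation

variable {D : FreeAlgebra k (Fin 2) →ₗ[k] FreeAlgebra k (Fin 2)} (hD : IsGradedDerivation D)
  (hz : D (ι k 0) = 0) (hy : D (ι k 1) = ι k 1 * ι k 1)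
include hD hz

lemma map_ι_zero_mul (x : FreeAlgebra k (Fin 2)) : D (ι k 0 * x) = -(ι k 0 * D x) := by
  rw [hD.map_ι_mul, hz, zero_mul, zero_sub]

lemma map_mem_spanWordsHeadNeOne {m : FreeAlgebra k (Fin 2)} (hm : m ∈ spanWordsHeadNeOne) :
    D m ∈ spanWordsHeadNeOne := by
  refine (span_le (p := spanWordsHeadNeOne.comap D)).2 ?_ hm
  rintro _ ⟨_ | ⟨i, u⟩, hu, rfl⟩
  · simp [hD.map_one]
  · obtain rfl : i = 0 := by simp at hu; omega
    simpa [hD.map_ι_zero_mul hz] using neg_mem (ι_zero_mul_mem_spanWordsHeadNeOne (D (word u)))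

lemma map_homotopy_add_homotopy_map_ι_zero_mul (x : FreeAlgebra k (Fin 2)) :
    D (homotopy (ι k 0 * x)) + homotopy (D (ι k 0 * x)) =
      ι k 0 * (D (homotopy x) + homotopy (D x)) := by
  rw [homotopy_ι_zero_mul, map_neg, hD.map_ι_zero_mul hz, hD.map_ι_zero_mul hz, map_neg,
    homotopy_ι_zero_mul]
  noncomm_ring

include hy

lemma map_homotopy_add_homotopy_map_ι_one_pow_succ_mul (b : ℕ) {m : FreeAlgebra k (Fin 2)}
    (hm : m ∈ spanWordsHeadNeOne) :
    D (homotopy (ι k 1 ^ (b + 1) * m)) + homotopy (D (ι k 1 ^ (b + 1) * m)) =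
      ι k 1 ^ (b + 1) * m := by
  have hDm := hD.map_mem_spanWordsHeadNeOne hz hm
  have hmul (e : ℕ) (x) :
      D (ι k 1 ^ e * x) = D (ι k 1 ^ e) * x + (-1 : k) ^ e • (ι k 1 ^ e * D x) :=
    hD e _ _ (pow_mem_deg (ι_mem_deg_one 1) e)
  have hD_odd (c : ℕ) :
      D (ι k 1 ^ (2 * c + 1) * m) = ι k 1 ^ (2 * c + 2) * m - ι k 1 ^ (2 * c + 1) * D m := by
    rw [hmul, (hD.map_ι_pow_two_mul hy c).2, pow_succ (-1 : k), (even_two_mul c).neg_one_pow]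
    simp [sub_eq_add_neg]
  obtain ⟨c, rfl | rfl⟩ := Nat.even_or_odd' b
  · have hodd : ¬ Odd (2 * c) := Nat.not_odd_iff_even.2 (even_two_mul c)
    simp [hD_odd, hodd, homotopy_ι_one_pow_succ_mul _ hm, homotopy_ι_one_pow_succ_mul _ hDm]
  · have hD_even : D (ι k 1 ^ (2 * c + 2) * m) = ι k 1 ^ (2 * c + 2) * D m := by
      rw [hmul, show 2 * c + 2 = 2 * (c + 1) by ring, (hD.map_ι_pow_two_mul hy (c + 1)).1,
        (even_two_mul _).neg_one_pow]
      simp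
    simp [hD_even, hD_odd, homotopy_ι_one_pow_succ_mul _ hm, homotopy_ι_one_pow_succ_mul _ hDm]

lemma exists_word_eq_smul_pow_add (l : List (Fin 2)) : ∃ c : k,
    word l = c • ι k 0 ^ l.length + (D (homotopy (word l)) + homotopy (D (word l))) := by
  induction l with
  | nil => exact ⟨1, by simp [hD.map_one, homotopy_one]⟩
  | cons i l ih =>
    obtain rfl | rfl : i = 0 ∨ i = 1 := by omega
    · obtain ⟨c, hc⟩ := ih
      refine ⟨c, ?_⟩
      rw [word_cons, hD.map_homotopy_add_homotopy_map_ι_zero_mul hz, List.length_cons, pow_succ',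
        ← mul_smul_comm, ← mul_add, ← hc]
    · obtain ⟨b, u, rfl, hu⟩ := List.exists_eq_replicate_append 1 l
      refine ⟨0, ?_⟩
      have hm : word u ∈ spanWordsHeadNeOne (k := k) := subset_span ⟨u, hu, rfl⟩
      rw [zero_smul, zero_add, ← List.cons_append, ← List.replicate_succ, word_append,
        word_replicate, hD.map_homotopy_add_homotopy_map_ι_one_pow_succ_mul hz hy b hm]

lemma exists_eq_smul_pow_add {j : ℕ} {x : FreeAlgebra k (Fin 2)} (hx : x ∈ deg k 2 j) :
    ∃ c : k, x = c • ι k 0 ^ j + (D (homotopy x) + homotopy (D x)) := by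
  rw [deg_eq_span_word] at hx
  induction hx using span_induction with
  | mem _ h => obtain ⟨l, rfl, rfl⟩ := h; exact hD.exists_word_eq_smul_pow_add hz hy l
  | zero => exact ⟨0, by simp⟩
  | add x x' _ _ h h' =>
    obtain ⟨c, hc⟩ := h
    obtain ⟨c', hc'⟩ := h'
    refine ⟨c + c', ?_⟩
    simp only [map_add]
    nth_rw 1 [hc, hc']
    module
  | smul r x _ h =>
    obtain ⟨c, hc⟩ := h
    refine ⟨r * c, ?_⟩
    simp only [map_smul]
    nth_rw 1 [hc]
    module

lemma exists_eq_smul_pow_add_map_of_map_eq_zero {j : ℕ} {x : FreeAlgebra k (Fin 2)}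
    (hx : x ∈ deg k 2 j) (hDx : D x = 0) :
    ∃ c : k, ∃ b ∈ deg k 2 (j - 1), x = c • ι k 0 ^ j + D b := by
  obtain ⟨c, hc⟩ := hD.exists_eq_smul_pow_add hz hy hx
  exact ⟨c, homotopy x, homotopy_mem_deg hx, by rwa [hDx, map_zero, add_zero] at hc⟩

end IsGradedDerivation

namespace FreeAlgebra

noncomputable def twistHom : FreeAlgebra k (Fin 2) →ₐ[k] FreeAlgebra k (Fin 2) :=
  lift k ![ι k 1 - ι k 0, ι k 1]

lemma twistHom_comp_twistHom : (twistHom (k := k)).comp twistHom = AlgHom.id k _ := by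
  ext i
  fin_cases i <;> simp [twistHom]

noncomputable def twist : FreeAlgebra k (Fin 2) ≃ₐ[k] FreeAlgebra k (Fin 2) :=
  .ofAlgHom twistHom twistHom twistHom_comp_twistHom twistHom_comp_twistHom

@[simp] lemma twist_symm : (twist (k := k)).symm = twist := rfl

@[simp] lemma twist_twist (x : FreeAlgebra k (Fin 2)) : twist (twist x) = x :=
  twist.symm_apply_apply x

@[simp] lemma twist_ι_zero : twist (ι k 0) = ι k 1 - ι k 0 := by simp [twist, twistHom]

@[simp] lemma twist_ι_one : twist (ι k 1) = ι k 1 := by simp [twist, twistHom]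

lemma twist_mem_deg {j : ℕ} {x : FreeAlgebra k (Fin 2)} (hx : x ∈ deg k 2 j) :
    twist x ∈ deg k 2 j :=
  algHom_mem_deg twistHom (fun i => by
    fin_cases i
    · simpa [twistHom] using sub_mem (ι_mem_deg_one (k := k) (n := 2) 1) (ι_mem_deg_one 0)
    · simpa [twistHom] using ι_mem_deg_one (k := k) (n := 2) 1) hx

end FreeAlgebra

end GradedDerivation

theorem stmt10_general {k : Type*} [Field k]
    (d : FreeAlgebra k (Fin 2) →ₗ[k] FreeAlgebra k (Fin 2))
    (hL : ∀ (p : ℕ) (a b : FreeAlgebra k (Fin 2)), a ∈ deg k 2 p →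
      d (a * b) = d a * b + ((-1 : k) ^ p) • (a * d b))
    (h1 : d (FreeAlgebra.ι k 0) = FreeAlgebra.ι k 1 * FreeAlgebra.ι k 1)
    (h2 : d (FreeAlgebra.ι k 1) = FreeAlgebra.ι k 1 * FreeAlgebra.ι k 1) :
    (∀ j : ℕ, (FreeAlgebra.ι k 1 - FreeAlgebra.ι k 0) ^ j ∈ deg k 2 j ∧
      d ((FreeAlgebra.ι k 1 - FreeAlgebra.ι k 0) ^ j) = 0) ∧
    (∀ j : ℕ, 1 ≤ j →
      ¬ ∃ b ∈ deg k 2 (j - 1), d b = (FreeAlgebra.ι k 1 - FreeAlgebra.ι k 0) ^ j) ∧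
    (∀ j : ℕ, ∀ a ∈ deg k 2 j, d a = 0 →
      ∃ c : k, ∃ b ∈ deg k 2 (j - 1),
        a = c • (FreeAlgebra.ι k 1 - FreeAlgebra.ι k 0) ^ j + d b) := by
  have hd : IsGradedDerivation d := hL
  have hz : ι k 1 - ι k 0 ∈ deg k 2 1 := sub_mem (ι_mem_deg_one 1) (ι_mem_deg_one 0)
  have hdz : d (ι k 1 - ι k 0) = 0 := by rw [map_sub, h1, h2, sub_self]
  refine ⟨fun j => ⟨pow_mem_deg hz j, hd.map_pow_eq_zero hz hdz j⟩, ?_, ?_⟩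
  · rintro j - ⟨b, -, hb⟩
    have hψ := hd.algHom_map_eq_zero (lift k ![(1 : k), 0])
      (by intro i; fin_cases i <;> simp [h1, h2]) b
    simp [hb] at hψ
  · intro j a ha hda
    let D := twist.toLinearMap ∘ₗ d ∘ₗ twist.symm.toLinearMap
    have hD : IsGradedDerivation D := hd.conj twist fun _ _ => twist_mem_deg
    obtain ⟨c, b, hb, hab⟩ := hD.exists_eq_smul_pow_add_map_of_map_eq_zero
      (by simp [D, h1, h2]) (by simp [D, h2]) (twist_mem_deg ha) (by simp [D, hda])
    refine ⟨c, twist b, twist_mem_deg hb, twist.injective ?_⟩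
    simpa [D] using hab

/-- the cochain DG algebra `B₈` on `k⟨x₁,x₂⟩` with
`∂(x₁) = x₂²`, `∂(x₂) = x₂²` has cohomology the polynomial algebra on the
class of `x₂ − x₁`: for every `j ≥ 0`, `Hʲ(B₈)` is one-dimensional,
spanned by the class of `(x₂ − x₁)ʲ`. -/
theorem stmt10 {k : Type*} [Field k] [CharZero k]
    (d : FreeAlgebra k (Fin 2) →ₗ[k] FreeAlgebra k (Fin 2))
    (hL : ∀ (p : ℕ) (a b : FreeAlgebra k (Fin 2)), a ∈ deg k 2 p →
      d (a * b) = d a * b + ((-1 : k) ^ p) • (a * d b))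
    (h1 : d (FreeAlgebra.ι k 0) = FreeAlgebra.ι k 1 * FreeAlgebra.ι k 1)
    (h2 : d (FreeAlgebra.ι k 1) = FreeAlgebra.ι k 1 * FreeAlgebra.ι k 1)
    (hdd : ∀ x, d (d x) = 0) :
    (∀ j : ℕ, (FreeAlgebra.ι k 1 - FreeAlgebra.ι k 0) ^ j ∈ deg k 2 j ∧
      d ((FreeAlgebra.ι k 1 - FreeAlgebra.ι k 0) ^ j) = 0) ∧
    (∀ j : ℕ, 1 ≤ j →
      ¬ ∃ b ∈ deg k 2 (j - 1), d b = (FreeAlgebra.ι k 1 - FreeAlgebra.ι k 0) ^ j) ∧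
    (∀ j : ℕ, ∀ a ∈ deg k 2 j, d a = 0 →
      ∃ c : k, ∃ b ∈ deg k 2 (j - 1),
        a = c • (FreeAlgebra.ι k 1 - FreeAlgebra.ι k 0) ^ j + d b) :=
  stmt10_general d hL h1 h2
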